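/- Let P_q(t) = ∑_{n≥1} ([p_n]/[n]_q) t^n. Then E(t) = ∑_{n≥0} e_n t^n = e_q[ -P_q(-t) ]_q, where e_q(t) = ∑_{n≥0} t^n/[n]_q! and [·]_q denotes Gessel q-composition. -/

import Mathlib

/-- The q-integer `[n]_q = 1 + q + ... + q^{n-1}`. -/
noncomputable def qInt {K : Type*} [CommRing K] (q : K) (n : ℕ) : K :=
  ∑ i ∈ Finset.range n, q ^ i

/-- The q-factorial `[n]_q!`. -/
noncomputable def qFact {K : Type*} [CommRing K] (q : K) (n : ℕ) : K :=
  ∏ i ∈ Finset.range n, qInt q (i + 1)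

/-- The q-derivative `D_q F(t) = (F(qt) - F(t))/((q-1)t)`. -/
noncomputable def qDeriv {K : Type*} [CommRing K] (q : K) (F : PowerSeries K) :
    PowerSeries K :=
  PowerSeries.mk fun n => qInt q (n + 1) * PowerSeries.coeff (n + 1) F


/-!
Both `E(t)` and `e_q[F]_q` solve the q-differential equation `D_q X = X · D_q F` with constant
term `1`. For `E` this is the definition of the `[pₙ]`, since `D_q F = ∑ (-1)ⁿ [pₙ₊₁] tⁿ`; for the
composite it follows termwise from `D_q (F^{[k]} / [k]!) = F^{[k-1]} / [k-1]! · D_q F`. As every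
`[n]_q` is invertible, comparing the coefficients of `tⁿ` on both sides determines the coefficient
of `tⁿ⁺¹` of a solution, so a solution is determined by its constant term.
-/

section

open PowerSeries Finset

variable {K : Type*}

@[simp]
theorem coeff_qDeriv [CommRing K] (q : K) (G : K⟦X⟧) (n : ℕ) :
    coeff n (qDeriv q G) = qInt q (n + 1) * coeff (n + 1) G := by
  simp [qDeriv]

@[simp]
theorem qDeriv_one [CommRing K] (q : K) : qDeriv q 1 = 0 := by
  ext n
  simp [coeff_one]

@[simp]
theorem qFact_zero [CommRing K] (q : K) : qFact q 0 = 1 := by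
  simp [qFact]

theorem qFact_succ [CommRing K] (q : K) (k : ℕ) :
    qFact q (k + 1) = qFact q k * qInt q (k + 1) := by
  simp [qFact, prod_range_succ]

section Field

variable [Field K] {q : K}

theorem eq_of_qDeriv_eq_mul_self (hq : ∀ m : ℕ, 1 ≤ m → qInt q m ≠ 0) {f g A : K⟦X⟧}
    (h0 : constantCoeff f = constantCoeff g)
    (hf : qDeriv q f = f * A) (hg : qDeriv q g = g * A) : f = g := by
  ext n
  induction n using Nat.strong_induction_on with
  | _ n ih =>
    cases n with
    | zero => simpa using h0
    | succ m =>
      have hcoeff : ∀ h : K⟦X⟧, qDeriv q h = h * A →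
          qInt q (m + 1) * coeff (m + 1) h =
            ∑ x ∈ antidiagonal m, coeff x.1 h * coeff x.2 A := by
        intro h hh
        rw [← coeff_qDeriv, hh, coeff_mul]
      refine mul_left_cancel₀ (hq (m + 1) m.succ_pos) ?_
      rw [hcoeff f hf, hcoeff g hg]
      refine sum_congr rfl fun x hx => ?_
      rw [ih x.1 (by have := mem_antidiagonal.mp hx; omega)]

theorem qDeriv_mk_of_coeff_mul_qInt_eq (a b : ℕ → K)
    (hab : ∀ n, a (n + 1) * qInt q (n + 1) = b n) :
    qDeriv q (mk a) = mk b := by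
  ext n
  simp [← hab n, mul_comm]

/-- `e_q[F]_q = ∑ₖ F^{[k]} / [k]!`, given the Gessel q-powers `Fk k = F^{[k]}`. The sum is
finite in each degree because `F^{[k]}` has order at least `k`. -/
noncomputable def gesselQExp (q : K) (Fk : ℕ → K⟦X⟧) : K⟦X⟧ :=
  mk fun n => ∑ k ∈ range (n + 1), (qFact q k)⁻¹ * coeff n (Fk k)

variable {A : K⟦X⟧} {Fk : ℕ → K⟦X⟧}

theorem coeff_gesselPow_of_lt (hq : ∀ m : ℕ, 1 ≤ m → qInt q m ≠ 0)
    (hFkc : ∀ k, 0 < k → constantCoeff (Fk k) = 0)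
    (hFkrec : ∀ k, 0 < k → qDeriv q (Fk k) = C (qInt q k) * Fk (k - 1) * A)
    {k n : ℕ} (hnk : n < k) : coeff n (Fk k) = 0 := by
  induction k generalizing n with
  | zero => omega
  | succ k ih =>
    cases n with
    | zero => simpa using hFkc (k + 1) k.succ_pos
    | succ m =>
      have hD : coeff m (qDeriv q (Fk (k + 1))) = 0 := by
        rw [hFkrec (k + 1) k.succ_pos, Nat.add_sub_cancel, mul_assoc, coeff_C_mul, coeff_mul,
          sum_eq_zero, mul_zero]
        intro x hx
        rw [ih (by have := mem_antidiagonal.mp hx; omega), zero_mul]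
      rw [coeff_qDeriv] at hD
      exact (mul_eq_zero.mp hD).resolve_left (hq (m + 1) m.succ_pos)

theorem coeff_gesselQExp_eq_sum_range (hq : ∀ m : ℕ, 1 ≤ m → qInt q m ≠ 0)
    (hFkc : ∀ k, 0 < k → constantCoeff (Fk k) = 0)
    (hFkrec : ∀ k, 0 < k → qDeriv q (Fk k) = C (qInt q k) * Fk (k - 1) * A)
    {n N : ℕ} (hnN : n < N) :
    coeff n (gesselQExp q Fk) = ∑ k ∈ range N, (qFact q k)⁻¹ * coeff n (Fk k) := by
  rw [gesselQExp, coeff_mk]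
  refine sum_subset (range_subset_range.mpr hnN) fun k _ hk => ?_
  rw [coeff_gesselPow_of_lt hq hFkc hFkrec (by simpa using hk), mul_zero]

theorem qFact_inv_mul_coeff_qDeriv_gesselPow (hq : ∀ m : ℕ, 1 ≤ m → qInt q m ≠ 0)
    (hFkrec : ∀ k, 0 < k → qDeriv q (Fk k) = C (qInt q k) * Fk (k - 1) * A) (k n : ℕ) :
    (qFact q (k + 1))⁻¹ * coeff n (qDeriv q (Fk (k + 1))) =
      (qFact q k)⁻¹ * coeff n (Fk k * A) := by
  rw [hFkrec (k + 1) k.succ_pos, Nat.add_sub_cancel, mul_assoc, coeff_C_mul, qFact_succ,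
    mul_inv, mul_assoc, inv_mul_cancel_left₀ (hq (k + 1) k.succ_pos)]

theorem qDeriv_gesselQExp (hq : ∀ m : ℕ, 1 ≤ m → qInt q m ≠ 0) (hFk0 : Fk 0 = 1)
    (hFkc : ∀ k, 0 < k → constantCoeff (Fk k) = 0)
    (hFkrec : ∀ k, 0 < k → qDeriv q (Fk k) = C (qInt q k) * Fk (k - 1) * A) :
    qDeriv q (gesselQExp q Fk) = gesselQExp q Fk * A := by
  ext n
  calc coeff n (qDeriv q (gesselQExp q Fk))
      = ∑ k ∈ range (n + 2), (qFact q k)⁻¹ * coeff n (qDeriv q (Fk k)) := by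
        rw [coeff_qDeriv, gesselQExp, coeff_mk, mul_sum]
        exact sum_congr rfl fun k _ => by rw [coeff_qDeriv]; ring
    _ = ∑ k ∈ range (n + 1), (qFact q k)⁻¹ * coeff n (Fk k * A) := by
        rw [sum_range_succ', hFk0, qDeriv_one, map_zero, mul_zero, add_zero]
        exact sum_congr rfl fun k _ => qFact_inv_mul_coeff_qDeriv_gesselPow hq hFkrec k n
    _ = ∑ x ∈ antidiagonal n,
          (∑ k ∈ range (n + 1), (qFact q k)⁻¹ * coeff x.1 (Fk k)) * coeff x.2 A := by
        simp only [coeff_mul, mul_sum, sum_mul, mul_assoc]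
        exact sum_comm
    _ = coeff n (gesselQExp q Fk * A) := by
        rw [coeff_mul]
        refine sum_congr rfl fun x hx => ?_
        rw [coeff_gesselQExp_eq_sum_range hq hFkc hFkrec (N := n + 1)
          (by have := mem_antidiagonal.mp hx; omega)]

end Field

end

/-- Theorem 5.5: with `P_q(t) = ∑_{n≥1} ([pₙ]/[n]) tⁿ` and `F = -P_q(-t)`
(coefficient of `tⁿ` equal to `(-1)^{n-1}[pₙ]/[n]`), and `F^{[k]}` the Gessel q-powers
of `F`, one has `E(t) = e_q[-P_q(-t)]_q`, i.e. `eₙ = ∑_k (1/[k]!) ⬝ coeff n F^{[k]}`. -/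
theorem stmt12 {K : Type*} [Field K] (q : K)
    (hq : ∀ m : ℕ, 1 ≤ m → qInt q m ≠ 0)
    (e p : ℕ → K) (he0 : e 0 = 1)
    (hdefp : qDeriv q (PowerSeries.mk e) =
      PowerSeries.mk e * PowerSeries.mk (fun n => (-1 : K) ^ n * p (n + 1)))
    (F : PowerSeries K)
    (hFdef : F = PowerSeries.mk fun n =>
      if n = 0 then 0 else (-1 : K) ^ (n - 1) * p n / qInt q n)
    (Fk : ℕ → PowerSeries K) (hFk0 : Fk 0 = 1)
    (hFkc : ∀ k, 0 < k → PowerSeries.constantCoeff (Fk k) = 0)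
    (hFkrec : ∀ k, 0 < k → qDeriv q (Fk k) =
      PowerSeries.C (qInt q k) * Fk (k - 1) * qDeriv q F) :
    ∀ n, e n = ∑ k ∈ Finset.range (n + 1),
      (qFact q k)⁻¹ * PowerSeries.coeff n (Fk k) := by
  have hDF : qDeriv q F = PowerSeries.mk fun n => (-1 : K) ^ n * p (n + 1) := by
    rw [hFdef]
    refine qDeriv_mk_of_coeff_mul_qInt_eq _ _ fun n => ?_
    rw [if_neg n.succ_ne_zero, Nat.add_sub_cancel, div_mul_cancel₀ _ (hq (n + 1) n.succ_pos)]
  have hE : PowerSeries.mk e = gesselQExp q Fk := by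
    refine eq_of_qDeriv_eq_mul_self hq ?_ (hdefp.trans (by rw [hDF]))
      (qDeriv_gesselQExp hq hFk0 hFkc hFkrec)
    simp [gesselQExp, he0, hFk0]
  intro n
  simpa [gesselQExp] using congrArg (PowerSeries.coeff n) hE
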